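/- arXiv:2002.08853 — 3 statements merged into one kernel-verified Lean document; each statement's English description precedes it below -/
import Mathlib

section
/- In the Rao–Kupper model with threshold θ > 1, each of the three functions y ↦ e^y/(e^y + θ), y ↦ (θ² - 1)e^y/((e^y + θ)(θ e^y + 1)), and y ↦ 1/(θ e^y + 1) is strictly log-concave on ℝ. -/
/-!
Each of the three log-probabilities is an affine function of `y` minus a sum of terms
`log (a * exp y + b)` with `a, b > 0`: namely `y - log (exp y + θ)`,
`log (θ ^ 2 - 1) + y - log (exp y + θ) - log (θ * exp y + 1)` and `-log (θ * exp y + 1)`.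
Each such term is strictly convex, with second derivative
`a * b * exp y / (a * exp y + b) ^ 2`.
-/

open Real

section

variable {a b : ℝ}

lemma mul_exp_add_pos (ha : 0 ≤ a) (hb : 0 < b) (t : ℝ) : 0 < a * exp t + b := by
  positivity

lemma contDiff_log_mul_exp_add (ha : 0 ≤ a) (hb : 0 < b) {n : WithTop ℕ∞} :
    ContDiff ℝ n fun t => log (a * exp t + b) :=
  ((contDiff_const.mul contDiff_exp).add contDiff_const).log
    fun t => (mul_exp_add_pos ha hb t).ne'

lemma deriv_log_mul_exp_add (ha : 0 ≤ a) (hb : 0 < b) :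
    deriv (fun t => log (a * exp t + b)) = fun t => a * exp t / (a * exp t + b) :=
  funext fun t =>
    ((((hasDerivAt_exp t).const_mul a).add_const b).log (mul_exp_add_pos ha hb t).ne').deriv

lemma iteratedDeriv_two_log_mul_exp_add (ha : 0 ≤ a) (hb : 0 < b) (t : ℝ) :
    iteratedDeriv 2 (fun t => log (a * exp t + b)) t = a * b * exp t / (a * exp t + b) ^ 2 := by
  have hexp := (hasDerivAt_exp t).const_mul a
  have hquot := hexp.fun_div (hexp.add_const b) (mul_exp_add_pos ha hb t).ne'
  rw [iteratedDeriv_succ, iteratedDeriv_one, deriv_log_mul_exp_add ha hb, hquot.deriv]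
  ring

lemma iteratedDeriv_two_log_mul_exp_add_pos (ha : 0 < a) (hb : 0 < b) (t : ℝ) :
    0 < iteratedDeriv 2 (fun t => log (a * exp t + b)) t := by
  rw [iteratedDeriv_two_log_mul_exp_add ha.le hb]
  positivity

end

theorem rao_kupper_strict_log_concave (θ : ℝ) (hθ : 1 < θ) (y : ℝ) :
    iteratedDeriv 2 (fun t : ℝ => Real.log (Real.exp t / (Real.exp t + θ))) y < 0 ∧
    iteratedDeriv 2 (fun t : ℝ =>
      Real.log ((θ ^ 2 - 1) * Real.exp t / ((Real.exp t + θ) * (θ * Real.exp t + 1)))) y < 0 ∧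
    iteratedDeriv 2 (fun t : ℝ => Real.log (1 / (θ * Real.exp t + 1))) y < 0 := by
  have hθ0 : 0 < θ := one_pos.trans hθ
  have hθsq : 0 < θ ^ 2 - 1 := by nlinarith
  have hconv₁ := iteratedDeriv_two_log_mul_exp_add_pos one_pos hθ0 y
  have hconv₂ := iteratedDeriv_two_log_mul_exp_add_pos hθ0 one_pos y
  have hsmooth₁ := contDiff_log_mul_exp_add zero_le_one hθ0 (n := 2)
  have hsmooth₂ := contDiff_log_mul_exp_add hθ0.le one_pos (n := 2)
  have hid : iteratedDeriv 2 (fun t : ℝ => t) y = 0 := by simp [iteratedDeriv_fun_id]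
  refine ⟨?_, ?_, ?_⟩
  · have hform : (fun t => log (exp t / (exp t + θ))) = fun t => t - log (1 * exp t + θ) := by
      funext t
      rw [one_mul, log_div (exp_ne_zero t) (by positivity), log_exp]
    rw [hform, iteratedDeriv_fun_sub contDiff_fun_id.contDiffAt hsmooth₁.contDiffAt, hid]
    linarith
  · have hform : (fun t => log ((θ ^ 2 - 1) * exp t / ((exp t + θ) * (θ * exp t + 1)))) =
        fun t => log (θ ^ 2 - 1) + (t - (log (1 * exp t + θ) + log (θ * exp t + 1))) := by
      funext t
      rw [one_mul, log_div (by positivity) (by positivity), log_mul hθsq.ne' (exp_ne_zero t),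
        log_mul (by positivity) (by positivity), log_exp, add_sub_assoc]
    rw [hform, iteratedDeriv_const_add two_pos,
      iteratedDeriv_fun_sub (n := 2) contDiff_fun_id.contDiffAt (hsmooth₁.add hsmooth₂).contDiffAt, hid,
      iteratedDeriv_fun_add hsmooth₁.contDiffAt hsmooth₂.contDiffAt]
    linarith
  · have hform : (fun t => log (1 / (θ * exp t + 1))) = fun t => -log (θ * exp t + 1) := by
      funext t
      rw [one_div, log_inv]
    rw [hform, iteratedDeriv_fun_neg]
    linarith
end

section
/- In Davidson's model with threshold θ > 0, each of the functions y ↦ e^y/(e^y + θe^{y/2} + 1), y ↦ θe^{y/2}/(e^y + θe^{y/2} + 1), and y ↦ 1/(e^y + θe^{y/2} + 1) is strictly log-concave on ℝ. -/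
/-!
Each `log f(x; y)` is an affine function of `y` minus `log D(y)`, so it suffices that `log D` is
strictly convex, i.e. `D'' D - D'^2 > 0`. In terms of `u = exp (y / 2)` this is the polynomial
identity `D'' D - D'^2 = u^2 + θ (u^3 + u) / 4`.
-/

open Real

lemma iteratedDeriv_two_eq_of_hasDerivAt {f f' : ℝ → ℝ} {f'' y : ℝ}
    (hf : ∀ t, HasDerivAt f (f' t) t) (hf' : HasDerivAt f' f'' y) :
    iteratedDeriv 2 f y = f'' := by
  rw [iteratedDeriv_succ, iteratedDeriv_one, funext fun t => (hf t).deriv]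
  exact hf'.deriv

lemma iteratedDeriv_two_affine_sub_log {D D' : ℝ → ℝ} {D'' : ℝ} (a c y : ℝ)
    (hD : ∀ t, HasDerivAt D (D' t) t) (hD' : HasDerivAt D' D'' y) (hD0 : ∀ t, D t ≠ 0) :
    iteratedDeriv 2 (fun t => a + c * t - log (D t)) y =
      -((D'' * D y - D' y ^ 2) / D y ^ 2) := by
  have hlin (t : ℝ) : HasDerivAt (fun t => a + c * t) c t := by
    simpa using ((hasDerivAt_id t).const_mul c).const_add a
  refine iteratedDeriv_two_eq_of_hasDerivAt (fun t => (hlin t).sub ((hD t).log (hD0 t))) ?_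
  simpa [sq] using (hD'.div (hD y) (hD0 y)).const_sub c

lemma hasDerivAt_exp_div_two (t : ℝ) :
    HasDerivAt (fun s => exp (s / 2)) (exp (t / 2) / 2) t := by
  simpa [div_eq_mul_inv, mul_comm] using ((hasDerivAt_id t).div_const 2).exp

lemma hasDerivAt_exp_add_mul_exp_div_two (k t : ℝ) :
    HasDerivAt (fun s => exp s + k * exp (s / 2)) (exp t + k / 2 * exp (t / 2)) t :=
  ((hasDerivAt_exp t).add ((hasDerivAt_exp_div_two t).const_mul k)).congr_deriv (by ring)

noncomputable def davidsonDenom (θ t : ℝ) : ℝ := exp t + θ * exp (t / 2) + 1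

lemma hasDerivAt_davidsonDenom (θ t : ℝ) :
    HasDerivAt (davidsonDenom θ) (exp t + θ / 2 * exp (t / 2)) t :=
  (hasDerivAt_exp_add_mul_exp_div_two θ t).add_const 1

lemma hasDerivAt_deriv_davidsonDenom (θ t : ℝ) :
    HasDerivAt (fun s => exp s + θ / 2 * exp (s / 2)) (exp t + θ / 4 * exp (t / 2)) t :=
  (hasDerivAt_exp_add_mul_exp_div_two (θ / 2) t).congr_deriv (by ring)

section

variable {θ : ℝ}

lemma davidsonDenom_pos (hθ : 0 ≤ θ) (t : ℝ) : 0 < davidsonDenom θ t := by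
  unfold davidsonDenom; positivity

lemma davidsonDenom_mul_sub_sq_pos (hθ : 0 ≤ θ) (y : ℝ) :
    0 < (exp y + θ / 4 * exp (y / 2)) * davidsonDenom θ y -
      (exp y + θ / 2 * exp (y / 2)) ^ 2 := by
  have hexp : exp y = exp (y / 2) ^ 2 := by rw [← exp_nat_mul]; ring_nf
  rw [davidsonDenom, hexp, show ∀ u : ℝ,
    (u ^ 2 + θ / 4 * u) * (u ^ 2 + θ * u + 1) - (u ^ 2 + θ / 2 * u) ^ 2 =
      u ^ 2 + θ / 4 * (u ^ 3 + u) from fun u => by ring]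
  positivity

lemma iteratedDeriv_two_affine_sub_log_davidsonDenom_neg (hθ : 0 ≤ θ) (a c y : ℝ) :
    iteratedDeriv 2 (fun t => a + c * t - log (davidsonDenom θ t)) y < 0 := by
  rw [iteratedDeriv_two_affine_sub_log a c y (hasDerivAt_davidsonDenom θ)
    (hasDerivAt_deriv_davidsonDenom θ y) fun t => (davidsonDenom_pos hθ t).ne']
  exact neg_neg_iff_pos.mpr
    (div_pos (davidsonDenom_mul_sub_sq_pos hθ y) (pow_pos (davidsonDenom_pos hθ y) 2))

end

theorem davidson_strict_log_concave (θ : ℝ) (hθ : 0 < θ) (y : ℝ) :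
    iteratedDeriv 2 (fun t : ℝ =>
      Real.log (Real.exp t / (Real.exp t + θ * Real.exp (t / 2) + 1))) y < 0 ∧
    iteratedDeriv 2 (fun t : ℝ =>
      Real.log (θ * Real.exp (t / 2) / (Real.exp t + θ * Real.exp (t / 2) + 1))) y < 0 ∧
    iteratedDeriv 2 (fun t : ℝ =>
      Real.log (1 / (Real.exp t + θ * Real.exp (t / 2) + 1))) y < 0 := by
  have hD (t : ℝ) : exp t + θ * exp (t / 2) + 1 ≠ 0 := (davidsonDenom_pos hθ.le t).ne'
  have key := iteratedDeriv_two_affine_sub_log_davidsonDenom_neg hθ.le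
  refine ⟨?_, ?_, ?_⟩
  · convert key 0 1 y using 3 with t
    rw [davidsonDenom, log_div (exp_ne_zero t) (hD t), log_exp]; ring
  · convert key (log θ) (1 / 2) y using 3 with t
    rw [davidsonDenom, log_div (by positivity) (hD t), log_mul hθ.ne' (exp_ne_zero _), log_exp]
    ring
  · convert key 0 0 y using 3 with t
    rw [davidsonDenom, log_div one_ne_zero (hD t), log_one]; ring
end

section
/- Suppose c_n ∈ [1/2, 1) and p_n ∈ (0,1] satisfy (log n)/(n p_n |log c_n|) → 0 as n → ∞. Then n·((1 + c_n^{(T/4) n p_n})^n - 1) → 0 as n → ∞, for any fixed constant T ≥ 1. -/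
/-!
Write `x = c ^ ((T / 4) n p) = exp (-(T / 4) n p |log c|)`. The sparsity condition says that
`n p |log c|` dominates every multiple of `log n`, so `n² x = exp (2 log n - (T / 4) n p |log c|)`
tends to `0`. Then `n ((1 + x) ^ n - 1) ≤ n · n x · exp (n x) → 0`, since `n x → 0` as well.
-/

open Filter Topology Real

lemma exp_sub_one_le_mul_exp (y : ℝ) : exp y - 1 ≤ y * exp y := by
  have h := mul_le_mul_of_nonneg_right (one_sub_le_exp_neg y) (exp_pos y).le
  rw [← exp_add, neg_add_cancel, exp_zero, sub_mul, one_mul] at h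
  linarith

lemma one_add_pow_sub_one_le {x : ℝ} (hx : 0 ≤ x) (n : ℕ) :
    (1 + x) ^ n - 1 ≤ n * x * exp (n * x) := by
  have hpow : (1 + x) ^ n ≤ exp (n * x) := calc
    (1 + x) ^ n ≤ exp x ^ n := by
      gcongr
      linarith [add_one_le_exp x]
    _ = exp (n * x) := (exp_nat_mul x n).symm
  linarith [exp_sub_one_le_mul_exp (n * x)]

lemma tendsto_mul_one_add_pow_sub_one {x : ℕ → ℝ} (hx : ∀ n, 0 ≤ x n)
    (h : Tendsto (fun n : ℕ => (n : ℝ) ^ 2 * x n) atTop (𝓝 0)) :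
    Tendsto (fun n : ℕ => (n : ℝ) * ((1 + x n) ^ n - 1)) atTop (𝓝 0) := by
  have hnx : Tendsto (fun n : ℕ => (n : ℝ) * x n) atTop (𝓝 0) := by
    refine squeeze_zero (fun n => mul_nonneg n.cast_nonneg (hx n)) (fun n => ?_) h
    have : (n : ℝ) ≤ (n : ℝ) ^ 2 := by exact_mod_cast Nat.le_self_pow two_ne_zero n
    exact mul_le_mul_of_nonneg_right this (hx n)
  have hbound : Tendsto (fun n : ℕ => (n : ℝ) ^ 2 * x n * exp (n * x n)) atTop (𝓝 0) := by
    simpa using h.mul ((continuous_exp.tendsto 0).comp hnx)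
  refine squeeze_zero (fun n => ?_) (fun n => ?_) hbound
  · have : 1 ≤ (1 + x n) ^ n := one_le_pow₀ (by linarith [hx n])
    have : 0 ≤ (n : ℝ) := n.cast_nonneg
    nlinarith
  · calc (n : ℝ) * ((1 + x n) ^ n - 1) ≤ n * (n * x n * exp (n * x n)) :=
          mul_le_mul_of_nonneg_left (one_add_pow_sub_one_le (hx n) n) n.cast_nonneg
      _ = (n : ℝ) ^ 2 * x n * exp (n * x n) := by ring

lemma tendsto_mul_sub_mul_atBot_of_div_tendsto_zero {α : Type*} {l : Filter α} {u b : α → ℝ}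
    (hb : ∀ᶠ a in l, 0 < b a) (hu : Tendsto u l atTop)
    (hub : Tendsto (fun a => u a / b a) l (𝓝 0)) (k : ℝ) {t : ℝ} (ht : 0 < t) :
    Tendsto (fun a => k * u a - t * b a) l atBot := by
  have hb_top : Tendsto b l atTop := by
    refine tendsto_atTop_mono' l ?_ hu
    filter_upwards [hb, hub.eventually (gt_mem_nhds one_pos)] with a hba hlt
    exact ((div_lt_one hba).1 hlt).le
  have hlim : Tendsto (fun a => k * (u a / b a) - t) l (𝓝 (-t)) := by
    simpa using (hub.const_mul k).sub_const t
  refine (hb_top.atTop_mul_neg (neg_neg_of_pos ht) hlim).congr' ?_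
  filter_upwards [hb] with a hba
  field_simp

lemma sq_mul_rpow_eq_exp {n c : ℝ} (hn : 0 < n) (hc : 0 < c) (hc1 : c ≤ 1) (s : ℝ) :
    n ^ 2 * c ^ s = exp (2 * log n - s * |log c|) := by
  have hexponent : 2 * log n - s * -log c = log (n ^ 2) + log c * s := by
    rw [log_pow]
    push_cast
    ring
  rw [abs_of_nonpos (log_nonpos hc.le hc1), rpow_def_of_pos hc, hexponent, exp_add,
    exp_log (by positivity)]

theorem sparsity_condition_implies_vanishing (T : ℝ) (hT : 1 ≤ T)
    (c p : ℕ → ℝ)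
    (hc : ∀ n, c n ∈ Set.Ico (1 / 2 : ℝ) 1)
    (hp : ∀ n, p n ∈ Set.Ioc (0 : ℝ) 1)
    (hlim : Tendsto (fun n : ℕ =>
        Real.log n / ((n : ℝ) * p n * |Real.log (c n)|)) atTop (nhds 0)) :
    Tendsto (fun n : ℕ =>
        (n : ℝ) * ((1 + (c n) ^ ((T / 4) * n * p n)) ^ n - 1)) atTop (nhds 0) := by
  have hc_pos : ∀ n, 0 < c n := fun n => by linarith [(hc n).1]
  have hb : ∀ᶠ n : ℕ in atTop, 0 < (n : ℝ) * p n * |log (c n)| := by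
    filter_upwards [eventually_gt_atTop 0] with n hn
    have hlog : log (c n) ≠ 0 := (log_neg (hc_pos n) (hc n).2).ne
    have hp_pos := (hp n).1
    positivity
  have hexp := tendsto_exp_atBot.comp <| tendsto_mul_sub_mul_atBot_of_div_tendsto_zero hb
    (tendsto_log_atTop.comp tendsto_natCast_atTop_atTop) hlim 2 (by linarith : (0 : ℝ) < T / 4)
  refine tendsto_mul_one_add_pow_sub_one (fun n => rpow_nonneg (hc_pos n).le _) (hexp.congr' ?_)
  filter_upwards [eventually_gt_atTop 0] with n hn
  rw [Function.comp_apply, sq_mul_rpow_eq_exp (by exact_mod_cast hn) (hc_pos n) (hc n).2.le]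
  simp only [Function.comp_apply]
  congr 1
  ring
end
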